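/- Let P be the Petersen graph, i.e. the Kneser graph whose vertices are the 2-element subsets of a 5-element set, with two vertices adjacent if and only if the corresponding subsets are disjoint. Then pn(E_c(P)) = 3, where E_c denotes the complete expansion graph and pn denotes the pagenumber. -/

import Mathlib

open SimpleGraph

/-- The vertex type of the complete expansion graph of `G`: incidence pairs `(v, e)`
with `e` an edge of `G` and `v` an endpoint of `e`. -/
abbrev IncidencePair {V : Type*} (G : SimpleGraph V) : Type _ :=
  {p : V × Sym2 V // p.2 ∈ G.edgeSet ∧ p.1 ∈ p.2}

/-- The complete expansion graph `E_c(G)` of a simple graph `G`: vertices are the incidence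
pairs `(v, e)` of `G`, and two distinct pairs `(v, e)`, `(w, f)` are adjacent iff `v = w`
or `e = f`. -/
def completeExpansion {V : Type*} (G : SimpleGraph V) : SimpleGraph (IncidencePair G) :=
  SimpleGraph.fromRel (fun x y =>
    (x : V × Sym2 V).1 = (y : V × Sym2 V).1 ∨ (x : V × Sym2 V).2 = (y : V × Sym2 V).2)

/-- With vertices placed on the spine at positions `f`, the edges `e = {a,b}` and
`e' = {c,d}` cross iff (for suitable representations) `f a < f c < f b < f d`. -/
def edgesCross {V : Type*} (f : V → ℕ) (e e' : Sym2 V) : Prop :=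
  ∃ a b c d : V, e = s(a, b) ∧ e' = s(c, d) ∧ f a < f c ∧ f c < f b ∧ f b < f d

/-- `G` admits a `k`-page book embedding: the vertices are linearly ordered along the spine
(via an injection into `ℕ`), every edge is either drawn on the spine (`none`, which is only
possible for an edge joining two consecutive vertices of the spine) or assigned to one of
`k` pages, and two edges assigned to the same page never cross. -/
def HasBookEmbedding {V : Type*} (G : SimpleGraph V) (k : ℕ) : Prop :=
  ∃ (f : V → ℕ) (page : G.edgeSet → Option (Fin k)),
    Function.Injective f ∧
    (∀ e : G.edgeSet, page e = none →
      ∃ a b : V, (e : Sym2 V) = s(a, b) ∧ f a < f b ∧ ∀ c : V, ¬(f a < f c ∧ f c < f b)) ∧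
    (∀ e e' : G.edgeSet, (page e).isSome → page e = page e' →
      ¬ edgesCross f (e : Sym2 V) (e' : Sym2 V))

/-- The pagenumber of `G`: the least number of pages of a book embedding of `G`. -/
noncomputable def pageNumber {V : Type*} (G : SimpleGraph V) : ℕ :=
  sInf {k | HasBookEmbedding G k}

/-!
The upper bound is an explicit 3-page embedding, checked by evaluation.

For the lower bound, `E_c(P)` contains nine paths forming a subdivision of `K_{3,3}`, and planarity
of 2-page graphs is replaced by a parity count. In a 2-page embedding two disjoint edges whose
endpoints interleave on the spine lie on different pages, so
`(1 + side e + side e') * crossParity e e' = 0`. Summing this over the edges of two vertex-disjoint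
paths and telescoping along both paths expresses the interleaving parity of the endpoints of the
paths through terms `straddleSum`, each involving one path and one endpoint of the other. Over the
18 pairs of independent edges of `K_{3,3}` every such term occurs twice, whereas the interleaving
parities of the endpoints add up to `1` for any placement of the six branch vertices on the spine.
-/

section BookEmbedding

variable {V : Type*} {G : SimpleGraph V} {k : ℕ} {f : V → ℕ} {page : G.edgeSet → Option (Fin k)}

def IsBookEmbedding (G : SimpleGraph V) (k : ℕ) (f : V → ℕ) (page : G.edgeSet → Option (Fin k)) :
    Prop :=
  Function.Injective f ∧
    (∀ e : G.edgeSet, page e = none →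
      ∃ a b : V, (e : Sym2 V) = s(a, b) ∧ f a < f b ∧ ∀ c : V, ¬(f a < f c ∧ f c < f b)) ∧
    (∀ e e' : G.edgeSet, (page e).isSome → page e = page e' →
      ¬ edgesCross f (e : Sym2 V) (e' : Sym2 V))

theorem IsBookEmbedding.exists_pages_ne (hE : IsBookEmbedding G k f page) {e e' : G.edgeSet}
    (h : edgesCross f e e') : ∃ p q, page e = some p ∧ page e' = some q ∧ p ≠ q := by
  obtain ⟨a, b, c, d, he, he', hac, hcb, hbd⟩ := h
  have off_spine : ∀ {x : G.edgeSet} {m n w : V}, (x : Sym2 V) = s(m, n) →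
      f m < f w → f w < f n → page x ≠ none := by
    intro x m n w hx hmw hwn hx_none
    obtain ⟨m', n', hx', hlt, hfree⟩ := hE.2.1 x hx_none
    rw [hx, Sym2.eq_iff] at hx'
    rcases hx' with ⟨rfl, rfl⟩ | ⟨rfl, rfl⟩
    · exact hfree w ⟨hmw, hwn⟩
    · omega
  obtain ⟨p, hp⟩ := Option.ne_none_iff_exists'.mp (off_spine he hac hcb)
  obtain ⟨q, hq⟩ := Option.ne_none_iff_exists'.mp (off_spine he' hcb hbd)
  refine ⟨p, q, hp, hq, fun hpq => hE.2.2 e e' (by simp [hp]) (by rw [hp, hq, hpq]) ?_⟩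
  exact ⟨a, b, c, d, he, he', hac, hcb, hbd⟩

theorem HasBookEmbedding.mono {m : ℕ} (h : HasBookEmbedding G k) (hkm : k ≤ m) :
    HasBookEmbedding G m := by
  obtain ⟨f, page, hf, hspine, hcross⟩ := h
  refine ⟨f, fun e => (page e).map (Fin.castLE hkm), hf, fun e he => hspine e ?_,
    fun e e' he hee' => hcross e e' ?_ ?_⟩
  · simpa using he
  · simpa using he
  · exact Option.map_injective (Fin.castLE_injective hkm) hee'

theorem pageNumber_eq_succ (h : HasBookEmbedding G (k + 1)) (h' : ¬ HasBookEmbedding G k) :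
    pageNumber G = k + 1 := by
  refine le_antisymm (Nat.sInf_le h) (not_lt.mp fun hlt => h' ?_)
  exact HasBookEmbedding.mono (Nat.sInf_mem (s := {k | HasBookEmbedding G k}) ⟨_, h⟩)
    (Nat.le_of_lt_succ hlt)

theorem hasBookEmbedding_of_pages (f : V → ℕ) (hf : Function.Injective f)
    (pages : Fin k → List (ℕ × ℕ))
    (hcover : ∀ a b, G.Adj a b → f a < f b → ∃ p, (f a, f b) ∈ pages p)
    (hpages : ∀ p, ∀ x ∈ pages p, ∀ y ∈ pages p, ¬(x.1 < y.1 ∧ y.1 < x.2 ∧ x.2 < y.2)) :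
    HasBookEmbedding G k := by
  have hpage : ∀ e : G.edgeSet, ∃ p, ∀ a b, (e : Sym2 V) = s(a, b) → f a < f b →
      (f a, f b) ∈ pages p := by
    rintro ⟨e, he⟩
    induction e using Sym2.ind with | h x y => ?_
    have hxy : G.Adj x y := he
    obtain ⟨p, hp⟩ : ∃ p, (min (f x) (f y), max (f x) (f y)) ∈ pages p := by
      rcases (hf.ne hxy.ne).lt_or_gt with h | h
      · simpa [h.le] using hcover x y hxy h
      · simpa [h.le] using hcover y x hxy.symm h
    refine ⟨p, fun a b hab hlt => ?_⟩
    rcases Sym2.eq_iff.mp hab with ⟨rfl, rfl⟩ | ⟨rfl, rfl⟩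
    · simpa [hlt.le] using hp
    · simpa [hlt.le] using hp
  choose page hpage using hpage
  refine ⟨f, fun e => some (page e), hf, by simp, ?_⟩
  rintro e e' - hee' ⟨a, b, c, d, he, he', hac, hcb, hbd⟩
  have hd := hpage e' c d he' (hcb.trans hbd)
  rw [← Option.some.inj hee'] at hd
  exact hpages _ _ (hpage e a b he (hac.trans hcb)) _ hd ⟨hac, hcb, hbd⟩

end BookEmbedding

theorem SimpleGraph.Walk.sum_darts_add {V : Type*} {G : SimpleGraph V} (h : V → ZMod 2) :
    ∀ {u v : V} (W : G.Walk u v), (W.darts.map fun d => h d.fst + h d.snd).sum = h u + h v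
  | _, _, .nil => (CharTwo.add_self_eq_zero _).symm
  | _, _, .cons (v := w) _ W => by
    rw [Walk.darts_cons, List.map_cons, List.sum_cons, W.sum_darts_add h]
    linear_combination CharTwo.add_self_eq_zero (h w)

theorem SimpleGraph.Walk.disjoint_of_mem_darts {V : Type*} {G : SimpleGraph V} {u u' v v' : V}
    {P : G.Walk u u'} {Q : G.Walk v v'} (hPQ : P.support.Disjoint Q.support) {d d' : G.Dart}
    (hd : d ∈ P.darts) (hd' : d' ∈ Q.darts) : [d.fst, d.snd].Disjoint [d'.fst, d'.snd] := by
  refine List.disjoint_of_subset_left ?_ (List.disjoint_of_subset_right ?_ hPQ)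
  · simp [P.dart_fst_mem_support_of_mem_darts hd, P.dart_snd_mem_support_of_mem_darts hd]
  · simp [Q.dart_fst_mem_support_of_mem_darts hd', Q.dart_snd_mem_support_of_mem_darts hd']

theorem List.sum_map_sum_map_comm {α β M : Type*} [AddCommMonoid M] (l : List α) (l' : List β)
    (g : α → β → M) :
    (l.map fun a => (l'.map fun b => g a b).sum).sum =
      (l'.map fun b => (l.map fun a => g a b).sum).sum := by
  simpa using Multiset.sum_map_sum_map (l : Multiset α) (l' : Multiset β) (f := g)

def before (m n : ℕ) : ZMod 2 := if m < n then 1 else 0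

theorem before_add_before {m n : ℕ} (h : m ≠ n) : before m n + before n m = 1 := by
  rcases h.lt_or_gt with h | h <;> simp [before, h, h.not_gt]

section Interleaving

variable {V : Type*} {G : SimpleGraph V}

/- When the four endpoints are distinct, `crossParity f d d' ≠ 0` says that exactly one endpoint
of `d'` lies strictly between the endpoints of `d`: the two chords interleave. -/

def straddle (f : V → ℕ) (d : G.Dart) (t : V) : ZMod 2 :=
  before (f d.fst) (f t) + before (f d.snd) (f t)

def crossParity (f : V → ℕ) (d d' : G.Dart) : ZMod 2 := straddle f d d'.fst + straddle f d d'.snd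

variable {f : V → ℕ}

theorem crossParity_comm (hf : Function.Injective f) {d d' : G.Dart}
    (hdd' : [d.fst, d.snd].Disjoint [d'.fst, d'.snd]) :
    crossParity f d d' = crossParity f d' d := by
  have hne : ∀ x ∈ [d.fst, d.snd], ∀ y ∈ [d'.fst, d'.snd],
      before (f x) (f y) + before (f y) (f x) = 1 :=
    fun x hx y hy => before_add_before (hf.ne (List.disjoint_iff_ne.mp hdd' x hx y hy))
  simp only [crossParity, straddle]
  linear_combination (norm := ring_nf) hne d.fst (by simp) d'.fst (by simp) +
    hne d.fst (by simp) d'.snd (by simp) + hne d.snd (by simp) d'.fst (by simp) +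
    hne d.snd (by simp) d'.snd (by simp)
  reduce_mod_char

theorem edgesCross_or_of_crossParity_ne_zero (hf : Function.Injective f) {d d' : G.Dart}
    (hdd' : [d.fst, d.snd].Disjoint [d'.fst, d'.snd]) (h : crossParity f d d' ≠ 0) :
    edgesCross f d.edge d'.edge ∨ edgesCross f d'.edge d.edge := by
  obtain ⟨⟨a, b⟩, hab⟩ := d
  obtain ⟨⟨c, e⟩, hce⟩ := d'
  have hne := List.disjoint_iff_ne.mp hdd'
  have hac := hf.ne (hne a (by simp) c (by simp))
  have hae := hf.ne (hne a (by simp) e (by simp))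
  have hbc := hf.ne (hne b (by simp) c (by simp))
  have hbe := hf.ne (hne b (by simp) e (by simp))
  simp only [crossParity, straddle, before] at h
  split_ifs at h <;> first
    | exact (h (by decide)).elim
    | exact .inl ⟨a, b, c, e, rfl, rfl, by omega, by omega, by omega⟩
    | exact .inl ⟨b, a, c, e, Sym2.eq_swap, rfl, by omega, by omega, by omega⟩
    | exact .inl ⟨a, b, e, c, rfl, Sym2.eq_swap, by omega, by omega, by omega⟩
    | exact .inl ⟨b, a, e, c, Sym2.eq_swap, Sym2.eq_swap, by omega, by omega, by omega⟩
    | exact .inr ⟨c, e, a, b, rfl, rfl, by omega, by omega, by omega⟩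
    | exact .inr ⟨c, e, b, a, rfl, Sym2.eq_swap, by omega, by omega, by omega⟩
    | exact .inr ⟨e, c, a, b, Sym2.eq_swap, rfl, by omega, by omega, by omega⟩
    | exact .inr ⟨e, c, b, a, Sym2.eq_swap, Sym2.eq_swap, by omega, by omega, by omega⟩

def side (page : G.edgeSet → Option (Fin 2)) (d : G.Dart) : ZMod 2 :=
  if page ⟨d.edge, d.edge_mem⟩ = some 1 then 1 else 0

theorem IsBookEmbedding.one_add_side_add_side_mul_crossParity
    {page : G.edgeSet → Option (Fin 2)} (hE : IsBookEmbedding G 2 f page) {d d' : G.Dart}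
    (hdd' : [d.fst, d.snd].Disjoint [d'.fst, d'.snd]) :
    (1 + side page d + side page d') * crossParity f d d' = 0 := by
  by_cases hc : crossParity f d d' = 0
  · rw [hc, mul_zero]
  obtain ⟨p, q, hp, hq, hpq⟩ : ∃ p q, page ⟨d.edge, d.edge_mem⟩ = some p ∧
      page ⟨d'.edge, d'.edge_mem⟩ = some q ∧ p ≠ q := by
    rcases edgesCross_or_of_crossParity_ne_zero hE.1 hdd' hc with h | h
    · exact hE.exists_pages_ne (e := ⟨d.edge, d.edge_mem⟩) (e' := ⟨d'.edge, d'.edge_mem⟩) h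
    · obtain ⟨q, p, hq, hp, hqp⟩ := hE.exists_pages_ne (e := ⟨d'.edge, d'.edge_mem⟩)
        (e' := ⟨d.edge, d.edge_mem⟩) h
      exact ⟨p, q, hp, hq, hqp.symm⟩
  have hsides : ∀ p q : Fin 2, p ≠ q →
      (1 : ZMod 2) + (if p = 1 then 1 else 0) + (if q = 1 then 1 else 0) = 0 := by
    decide
  simp only [side, hp, hq, Option.some.injEq, hsides p q hpq, zero_mul]

end Interleaving

section Walks

variable {V : Type*} {G : SimpleGraph V} {f : V → ℕ}

theorem sum_straddle_darts (t : V) {u u' : V} (P : G.Walk u u') :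
    (P.darts.map fun d => straddle f d t).sum = before (f u) (f t) + before (f u') (f t) :=
  P.sum_darts_add fun x => before (f x) (f t)

theorem sum_crossParity_darts (d : G.Dart) {v v' : V} (Q : G.Walk v v') :
    (Q.darts.map (crossParity f d)).sum = straddle f d v + straddle f d v' :=
  Q.sum_darts_add (straddle f d)

variable (f) in
def straddleSum (σ : G.Dart → ZMod 2) {u v : V} (W : G.Walk u v) (t : V) : ZMod 2 :=
  (W.darts.map fun d => σ d * straddle f d t).sum

theorem sum_one_add_mul_crossParity_darts (hf : Function.Injective f) (σ : G.Dart → ZMod 2)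
    {u u' v v' : V} {P : G.Walk u u'} (Q : G.Walk v v') (hPQ : P.support.Disjoint Q.support)
    {d : G.Dart} (hd : d ∈ P.darts) :
    (Q.darts.map fun d' => (1 + σ d + σ d') * crossParity f d d').sum =
      (straddle f d v + straddle f d v') + σ d * (straddle f d v + straddle f d v') +
        (Q.darts.map fun d' => σ d' * crossParity f d' d).sum := by
  rw [← sum_crossParity_darts d Q, ← List.sum_map_mul_left, ← List.sum_map_add,
    ← List.sum_map_add]
  refine congrArg List.sum (List.map_congr_left fun d' hd' => ?_)
  rw [crossParity_comm hf (Walk.disjoint_of_mem_darts hPQ hd hd')]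
  ring

theorem before_add_before_eq_straddleSum (hf : Function.Injective f) (σ : G.Dart → ZMod 2)
    {u u' v v' : V} (P : G.Walk u u') (Q : G.Walk v v') (hPQ : P.support.Disjoint Q.support)
    (hσ : ∀ d d' : G.Dart, [d.fst, d.snd].Disjoint [d'.fst, d'.snd] →
      (1 + σ d + σ d') * crossParity f d d' = 0) :
    before (f u) (f v) + before (f u) (f v') + before (f u') (f v) + before (f u') (f v') =
      straddleSum f σ P v + straddleSum f σ P v' + straddleSum f σ Q u + straddleSum f σ Q u' := by
  have hzero : (P.darts.map fun d =>
      (Q.darts.map fun d' => (1 + σ d + σ d') * crossParity f d d').sum).sum = 0 := by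
    refine List.sum_eq_zero fun _ hx => ?_
    obtain ⟨d, hd, rfl⟩ := List.mem_map.mp hx
    refine List.sum_eq_zero fun _ hy => ?_
    obtain ⟨d', hd', rfl⟩ := List.mem_map.mp hy
    exact hσ d d' (Walk.disjoint_of_mem_darts hPQ hd hd')
  have hσP : (P.darts.map fun d => σ d * (straddle f d v + straddle f d v')).sum =
      straddleSum f σ P v + straddleSum f σ P v' := by
    simp only [mul_add, List.sum_map_add, straddleSum]
  have hσQ : (Q.darts.map fun d' => (P.darts.map fun d => σ d' * crossParity f d' d).sum).sum =
      straddleSum f σ Q u + straddleSum f σ Q u' := by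
    simp only [List.sum_map_mul_left, sum_crossParity_darts, mul_add, List.sum_map_add,
      straddleSum]
  rw [List.map_congr_left fun d hd => sum_one_add_mul_crossParity_darts hf σ Q hPQ hd,
    List.sum_map_add, List.sum_map_add, List.sum_map_add, List.sum_map_sum_map_comm,
    sum_straddle_darts, sum_straddle_darts, hσP, hσQ] at hzero
  linear_combination (norm := ring_nf) hzero
  reduce_mod_char

def k33PairSum (F : Fin 3 → Fin 3 → Fin 3 → Fin 3 → ZMod 2) : ZMod 2 :=
  ∑ i, ∑ k with i < k, ∑ j, ∑ l with j ≠ l, F i j k l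

theorem k33PairSum_congr {F F' : Fin 3 → Fin 3 → Fin 3 → Fin 3 → ZMod 2}
    (h : ∀ i j k l, i ≠ k → j ≠ l → F i j k l = F' i j k l) : k33PairSum F = k33PairSum F' := by
  refine Finset.sum_congr rfl fun i _ => Finset.sum_congr rfl fun k hk =>
    Finset.sum_congr rfl fun j _ => Finset.sum_congr rfl fun l hl => h i j k l ?_ ?_
  · exact (Finset.mem_filter.mp hk).2.ne
  · exact (Finset.mem_filter.mp hl).2

theorem k33PairSum_eq_zero {T : Type*} (s : Fin 3 → Fin 3 → T → ZMod 2) (a b : Fin 3 → T) :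
    k33PairSum (fun i j k l => s i j (a k) + s i j (b l) + s k l (a i) + s k l (b j)) = 0 := by
  simp +decide only [k33PairSum, Finset.sum_filter, Fin.sum_univ_three, ↓reduceIte, add_zero,
    zero_add]
  ring_nf
  reduce_mod_char

theorem k33PairSum_before_eq_one (x y : Fin 3 → ℕ) (hy : Function.Injective y) :
    k33PairSum (fun i j k l =>
      before (x i) (x k) + before (x i) (y l) + before (y j) (x k) + before (y j) (y l)) = 1 := by
  have h01 := before_add_before (hy.ne (show (0 : Fin 3) ≠ 1 by decide))
  have h02 := before_add_before (hy.ne (show (0 : Fin 3) ≠ 2 by decide))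
  have h12 := before_add_before (hy.ne (show (1 : Fin 3) ≠ 2 by decide))
  simp +decide only [k33PairSum, Finset.sum_filter, Fin.sum_univ_three, ↓reduceIte, add_zero,
    zero_add]
  linear_combination (norm := ring_nf) h01 + h02 + h12
  reduce_mod_char

theorem not_hasBookEmbedding_two_of_walks {a b : Fin 3 → V} (W : ∀ i j, G.Walk (a i) (b j))
    (hW : ∀ i j k l, i ≠ k → j ≠ l → (W i j).support.Disjoint (W k l).support) :
    ¬ HasBookEmbedding G 2 := by
  rintro ⟨f, page, hE : IsBookEmbedding G 2 f page⟩
  have hb : Function.Injective fun j => f (b j) := by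
    intro j l hjl
    by_contra hne
    exact List.disjoint_iff_ne.mp (hW 0 j 1 l (by decide) hne) _ (W 0 j).end_mem_support _
      (W 1 l).end_mem_support (hE.1 hjl)
  have key := k33PairSum_congr fun i j k l hik hjl =>
    before_add_before_eq_straddleSum hE.1 (side page) (W i j) (W k l) (hW i j k l hik hjl)
      fun _ _ => hE.one_add_side_add_side_mul_crossParity
  rw [k33PairSum_before_eq_one _ _ hb,
    k33PairSum_eq_zero fun i j => straddleSum f (side page) (W i j)] at key
  exact one_ne_zero key

end Walks

instance SimpleGraph.fromRel.decidableRel {V : Type*} [DecidableEq V] (r : V → V → Prop)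
    [DecidableRel r] : DecidableRel (fromRel r).Adj :=
  fun a b => decidable_of_iff _ (fromRel_adj r a b).symm

instance completeExpansion.decidableRel {V : Type*} [DecidableEq V] (G : SimpleGraph V) :
    DecidableRel (completeExpansion G).Adj :=
  SimpleGraph.fromRel.decidableRel _

namespace Petersen

abbrev Vertex : Type := {s : Finset (Fin 5) // s.card = 2}

abbrev graph : SimpleGraph Vertex := fromRel fun a b => Disjoint a.1 b.1

def pair (a b : Fin 5) (h : ({a, b} : Finset (Fin 5)).card = 2 := by decide) : Vertex :=
  ⟨{a, b}, h⟩

/-- `inc a b c d` is the incidence pair of the vertex `{a, b}` and the edge `{{a, b}, {c, d}}`. -/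
def inc (a b c d : Fin 5) (hab : ({a, b} : Finset (Fin 5)).card = 2 := by decide)
    (hcd : ({c, d} : Finset (Fin 5)).card = 2 := by decide)
    (h : s(pair a b hab, pair c d hcd) ∈ graph.edgeSet := by decide) : IncidencePair graph :=
  ⟨(pair a b hab, s(pair a b hab, pair c d hcd)), h, Sym2.mem_mk_left _ _⟩

def spine : List (IncidencePair graph) :=
  [inc 2 3 1 4, inc 2 3 0 1, inc 2 3 0 4, inc 2 4 0 1, inc 2 4 0 3, inc 2 4 1 3,
   inc 0 2 1 4, inc 0 2 3 4, inc 0 2 1 3, inc 1 3 0 2, inc 1 3 2 4, inc 1 3 0 4,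
   inc 0 4 1 3, inc 0 4 2 3, inc 0 4 1 2, inc 1 2 0 4, inc 1 2 3 4, inc 1 2 0 3,
   inc 0 3 1 2, inc 0 3 2 4, inc 0 3 1 4, inc 0 1 2 4, inc 0 1 2 3, inc 0 1 3 4,
   inc 3 4 0 1, inc 3 4 1 2, inc 3 4 0 2, inc 1 4 0 3, inc 1 4 0 2, inc 1 4 2 3]

theorem mem_spine : ∀ v : IncidencePair graph, v ∈ spine := by decide

def spinePages : Fin 3 → List (ℕ × ℕ) :=
  ![[(0, 1), (0, 29), (1, 2), (3, 4), (4, 5), (6, 7), (6, 28), (7, 8), (7, 26), (8, 9), (9, 10),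
      (10, 11), (11, 12), (12, 13), (12, 14), (13, 14), (14, 15), (15, 16), (16, 17), (16, 25),
      (17, 18), (18, 19), (19, 20), (21, 22), (22, 23), (23, 24), (24, 25), (25, 26), (27, 28),
      (28, 29)],
    [(1, 22), (3, 21), (4, 19), (5, 10), (6, 8), (15, 17), (24, 26), (27, 29)],
    [(0, 2), (2, 13), (3, 5), (9, 11), (18, 20), (20, 27), (21, 23)]]

set_option synthInstance.maxSize 1000 in
theorem completeExpansion_hasBookEmbedding_three : HasBookEmbedding (completeExpansion graph) 3 :=
  hasBookEmbedding_of_pages (spine.idxOf ·)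
    (fun x _ h => (List.idxOf_inj (mem_spine x)).mp h) spinePages (by decide) (by decide)

def k33A : Fin 3 → IncidencePair graph := ![inc 0 1 2 3, inc 0 2 1 3, inc 0 3 1 2]

def k33B : Fin 3 → IncidencePair graph := ![inc 1 4 0 2, inc 2 4 0 1, inc 3 4 0 1]

def k33Path : Fin 3 → Fin 3 → List (IncidencePair graph) :=
  ![![[inc 0 1 2 3, inc 2 3 0 1, inc 2 3 1 4, inc 1 4 2 3, inc 1 4 0 2],
      [inc 0 1 2 3, inc 0 1 2 4, inc 2 4 0 1],
      [inc 0 1 2 3, inc 0 1 3 4, inc 3 4 0 1]],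
    ![[inc 0 2 1 3, inc 0 2 1 4, inc 1 4 0 2],
      [inc 0 2 1 3, inc 1 3 0 2, inc 1 3 2 4, inc 2 4 1 3, inc 2 4 0 1],
      [inc 0 2 1 3, inc 0 2 3 4, inc 3 4 0 2, inc 3 4 0 1]],
    ![[inc 0 3 1 2, inc 0 3 1 4, inc 1 4 0 3, inc 1 4 0 2],
      [inc 0 3 1 2, inc 0 3 2 4, inc 2 4 0 3, inc 2 4 0 1],
      [inc 0 3 1 2, inc 1 2 0 3, inc 1 2 3 4, inc 3 4 1 2, inc 3 4 0 1]]]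

def k33Walk (i j : Fin 3) : (completeExpansion graph).Walk (k33A i) (k33B j) :=
  (Walk.ofSupport (k33Path i j) (by revert i j; decide) (by revert i j; decide)).copy
    (by revert i j; decide) (by revert i j; decide)

theorem k33Walk_support_disjoint : ∀ i j k l, i ≠ k → j ≠ l →
    (k33Walk i j).support.Disjoint (k33Walk k l).support := by
  simp only [k33Walk, Walk.support_copy, Walk.support_ofSupport, List.disjoint_left]
  decide

theorem completeExpansion_not_hasBookEmbedding_two :
    ¬ HasBookEmbedding (completeExpansion graph) 2 :=
  not_hasBookEmbedding_two_of_walks k33Walk k33Walk_support_disjoint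

end Petersen

theorem stmt12 :
    pageNumber (completeExpansion (SimpleGraph.fromRel
      (fun a b : {s : Finset (Fin 5) // s.card = 2} => Disjoint a.1 b.1))) = 3 :=
  pageNumber_eq_succ Petersen.completeExpansion_hasBookEmbedding_three
    Petersen.completeExpansion_not_hasBookEmbedding_two
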